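/- arXiv:2106.03787 — 2 statements merged into one kernel-verified Lean document; each statement's English description precedes it below -/
import Mathlib

section
/- Let G : Δ_S → ℝ be differentiable and concave, r ∈ ℝ^{S×A}, and F(μ) = ⟨μ, r⟩ + G(ρ) where ρ is the state marginal of μ. Define the separable MFG reward R(s,a,ρ) = r(s,a) + ∇G(ρ)(s). Then a policy π maximizes F(μ_π) over all policies if and only if π is a Nash equilibrium of the MFG, i.e., J(π', ρ_π) ≤ J(π, ρ_π) for all policies π', where J(π', ρ) = ⟨μ_{π'}, R(·,·,ρ)⟩. -/
noncomputable section
open scoped BigOperators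

def IsDist {X : Type*} [Fintype X] (p : X → ℝ) : Prop :=
  (∀ x, 0 ≤ p x) ∧ ∑ x, p x = 1

def IsPolicy {S A : Type*} [Fintype A] (π : S → A → ℝ) : Prop :=
  ∀ s, IsDist (π s)

def IsKernel {S A : Type*} [Fintype S] (P : S → A → S → ℝ) : Prop :=
  ∀ s a, IsDist (P s a)

/-- Probability of (S_t = s, A_t = a) under policy `π`, kernel `P`, initial law `ρ0`. -/
def saDist {S A : Type*} [Fintype S] [Fintype A] (P : S → A → S → ℝ) (π : S → A → ℝ)
    (ρ0 : S → ℝ) : ℕ → S → A → ℝ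
  | 0 => fun s a => ρ0 s * π s a
  | (t + 1) => fun s a => π s a * ∑ s' : S, ∑ a' : A, P s' a' s * saDist P π ρ0 t s' a'

/-- Discounted state-action occupancy measure of policy `π`. -/
def occ {S A : Type*} [Fintype S] [Fintype A] (γ : ℝ) (P : S → A → S → ℝ)
    (π : S → A → ℝ) (ρ0 : S → ℝ) (s : S) (a : A) : ℝ :=
  (1 - γ) * ∑' t : ℕ, γ ^ t * saDist P π ρ0 t s a

/-- The Bellman flow constraint set `M`. -/
def InFlow {S A : Type*} [Fintype S] [Fintype A] (γ : ℝ) (P : S → A → S → ℝ)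
    (ρ0 : S → ℝ) (μ : S → A → ℝ) : Prop :=
  IsDist (fun p : S × A => μ p.1 p.2) ∧
  ∀ s, ∑ a, μ s a = (1 - γ) * ρ0 s + γ * ∑ s' : S, ∑ a' : A, P s' a' s * μ s' a'

open scoped RealInnerProductSpace

/-- The occupancy measure of `π` viewed as a point of Euclidean space `ℝ^{S×A}`. -/
def occE {S A : Type*} [Fintype S] [Fintype A] (γ : ℝ) (P : S → A → S → ℝ)
    (π : S → A → ℝ) (ρ0 : S → ℝ) : EuclideanSpace ℝ (S × A) :=
  WithLp.toLp 2 (fun p : S × A => occ γ P π ρ0 p.1 p.2)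

/-- The Bellman flow polytope `M` inside Euclidean space `ℝ^{S×A}`. -/
def MflowE {S A : Type*} [Fintype S] [Fintype A] (γ : ℝ) (P : S → A → S → ℝ)
    (ρ0 : S → ℝ) : Set (EuclideanSpace ℝ (S × A)) :=
  {μ | (∀ p, 0 ≤ μ p) ∧ (∑ p : S × A, μ p = 1) ∧
    ∀ s, ∑ a, μ (s, a) = (1 - γ) * ρ0 s + γ * ∑ s' : S, ∑ a' : A, P s' a' s * μ (s', a')}

/-- The state marginal `ρ(s) = ∑_a μ(s,a)` of a state-action vector. -/
def margE {S A : Type*} [Fintype S] [Fintype A] (μ : EuclideanSpace ℝ (S × A)) :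
    EuclideanSpace ℝ S :=
  WithLp.toLp 2 (fun s => ∑ a : A, μ (s, a))

/-!
Sending a policy to its occupancy measure maps the policies onto the Bellman flow polytope `M`:
a point `μ ∈ M` is the occupancy measure of the policy `μ(s, a) / ρ(s)`, because the state
marginals of both solve the same discounted flow equation, which has a unique solution.
So `π` maximizes `F(μ_π)` over policies iff `μ_π` maximizes the concave function
`F(μ) = ⟨μ, r⟩ + G(ρ)` over the convex set `M`, i.e. iff `DF(μ_π) μ ≤ DF(μ_π) μ_π` for all
`μ ∈ M`. By the chain rule `DF(μ_π) μ = ⟨μ, r⟩ + ⟨ρ, ∇G(ρ_π)⟩ = ⟨μ, R(·, ·, ρ_π)⟩`, which is the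
payoff `J(π', ρ_π)` when `μ = μ_π'`.
-/

open Finset

section FirstOrder
variable {E : Type*} [NormedAddCommGroup E] [NormedSpace ℝ E] {s : Set E} {f : E → ℝ}
  {f' : E →L[ℝ] ℝ} {x y : E}

theorem ConcaveOn.le_add_of_hasFDerivAt (hf : ConcaveOn ℝ s f) (hx : x ∈ s) (hy : y ∈ s)
    (hf' : HasFDerivAt f f' x) : f y ≤ f x + f' (y - x) := by
  set ℓ : ℝ →ᵃ[ℝ] E := AffineMap.lineMap x y
  have hderiv : HasDerivAt (f ∘ ℓ) (f' (y - x)) 0 := by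
    rw [← AffineMap.lineMap_apply_zero x y (k := ℝ)] at hf'
    exact hf'.comp_hasDerivAt (0 : ℝ) AffineMap.hasDerivAt_lineMap
  have hslope :=
    (hf.comp_affineMap ℓ).slope_le_of_hasDerivAt (by simpa [ℓ]) (by simpa [ℓ]) one_pos hderiv
  simp only [slope_def_field, Function.comp_apply, AffineMap.lineMap_apply_one,
    AffineMap.lineMap_apply_zero, sub_zero, div_one, ℓ] at hslope
  linarith

theorem ConcaveOn.isMaxOn_iff_fderiv_le (hf : ConcaveOn ℝ s f) (hx : x ∈ s)
    (hf' : HasFDerivAt f f' x) : IsMaxOn f s x ↔ ∀ y ∈ s, f' y ≤ f' x := by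
  refine ⟨fun hmax y hy => ?_, fun hle => isMaxOn_iff.2 fun y hy => ?_⟩
  · have := hmax.localize.hasFDerivWithinAt_nonpos hf'.hasFDerivWithinAt
      (sub_mem_posTangentConeAt_of_segment_subset (hf.1.segment_subset hx hy))
    rwa [map_sub, sub_nonpos] at this
  · have := hf.le_add_of_hasFDerivAt hx hy hf'
    rw [map_sub] at this
    linarith [hle y hy]

end FirstOrder

section Occupancy
variable {S A : Type*} [Fintype S] [Fintype A] {γ : ℝ} {P : S → A → S → ℝ} {π : S → A → ℝ}
  {ρ0 : S → ℝ}

lemma saDist_nonneg (hP : IsKernel P) (hπ : IsPolicy π) (hρ0 : ∀ s, 0 ≤ ρ0 s) (t : ℕ) (s : S)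
    (a : A) : 0 ≤ saDist P π ρ0 t s a := by
  induction t generalizing s a with
  | zero => exact mul_nonneg (hρ0 s) ((hπ s).1 a)
  | succ t ih =>
    exact mul_nonneg ((hπ s).1 a)
      (sum_nonneg fun s' _ => sum_nonneg fun a' _ => mul_nonneg ((hP s' a').1 s) (ih s' a'))

lemma saDist_eq_mul_sum (hπ : IsPolicy π) (t : ℕ) (s : S) (a : A) :
    saDist P π ρ0 t s a = π s a * ∑ b, saDist P π ρ0 t s b := by
  cases t with
  | zero => simp only [saDist, ← mul_sum, (hπ s).2]; ring
  | succ t => simp only [saDist, ← sum_mul, (hπ s).2, one_mul]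

lemma sum_saDist_succ (hπ : IsPolicy π) (t : ℕ) (s : S) :
    ∑ a, saDist P π ρ0 (t + 1) s a = ∑ s', ∑ a', P s' a' s * saDist P π ρ0 t s' a' := by
  simp only [saDist, ← sum_mul, (hπ s).2, one_mul]

lemma sum_saDist (hP : IsKernel P) (hπ : IsPolicy π) (hρ0 : IsDist ρ0) (t : ℕ) :
    ∑ s, ∑ a, saDist P π ρ0 t s a = 1 := by
  induction t with
  | zero => simp only [saDist, ← mul_sum, (hπ _).2, mul_one, hρ0.2]
  | succ t ih =>
    calc ∑ s, ∑ a, saDist P π ρ0 (t + 1) s a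
        = ∑ s', ∑ a', (∑ s, P s' a' s) * saDist P π ρ0 t s' a' := by
          simp only [sum_saDist_succ hπ, sum_mul]
          rw [sum_comm]
          exact sum_congr rfl fun s' _ => sum_comm
      _ = 1 := by simp only [(hP _ _).2, one_mul, ih]

lemma saDist_le_one (hP : IsKernel P) (hπ : IsPolicy π) (hρ0 : IsDist ρ0) (t : ℕ) (s : S)
    (a : A) : saDist P π ρ0 t s a ≤ 1 := by
  rw [← sum_saDist hP hπ hρ0 t, ← Fintype.sum_prod_type']
  exact single_le_sum (f := fun p : S × A => saDist P π ρ0 t p.1 p.2)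
    (fun p _ => saDist_nonneg hP hπ hρ0.1 t p.1 p.2) (mem_univ (s, a))

lemma hasSum_occ (hγ : γ ∈ Set.Ico 0 1) (hP : IsKernel P) (hπ : IsPolicy π) (hρ0 : IsDist ρ0)
    (s : S) (a : A) :
    HasSum (fun t => (1 - γ) * (γ ^ t * saDist P π ρ0 t s a)) (occ γ P π ρ0 s a) := by
  refine (Summable.hasSum ?_).mul_left (1 - γ)
  refine (summable_geometric_of_lt_one hγ.1 hγ.2).of_nonneg_of_le
    (fun t => mul_nonneg (pow_nonneg hγ.1 t) (saDist_nonneg hP hπ hρ0.1 t s a)) fun t => ?_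
  exact mul_le_of_le_one_right (pow_nonneg hγ.1 t) (saDist_le_one hP hπ hρ0 t s a)

lemma occ_nonneg (hγ : γ ∈ Set.Ico 0 1) (hP : IsKernel P) (hπ : IsPolicy π)
    (hρ0 : IsDist ρ0) (s : S) (a : A) : 0 ≤ occ γ P π ρ0 s a :=
  (hasSum_occ hγ hP hπ hρ0 s a).nonneg fun t => mul_nonneg (sub_nonneg.2 hγ.2.le)
    (mul_nonneg (pow_nonneg hγ.1 t) (saDist_nonneg hP hπ hρ0.1 t s a))

lemma occ_eq_mul_sum (hγ : γ ∈ Set.Ico 0 1) (hP : IsKernel P) (hπ : IsPolicy π)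
    (hρ0 : IsDist ρ0) (s : S) (a : A) :
    occ γ P π ρ0 s a = π s a * ∑ b, occ γ P π ρ0 s b := by
  have h := (hasSum_sum (s := univ) fun b _ => hasSum_occ hγ hP hπ hρ0 s b).mul_left (π s a)
  have hterm : ∀ t, π s a * ∑ b, (1 - γ) * (γ ^ t * saDist P π ρ0 t s b)
      = (1 - γ) * (γ ^ t * saDist P π ρ0 t s a) := fun t => by
    rw [saDist_eq_mul_sum hπ t s a, ← mul_sum, ← mul_sum]; ring
  simp only [hterm] at h
  exact (hasSum_occ hγ hP hπ hρ0 s a).unique h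

lemma sum_occ (hγ : γ ∈ Set.Ico 0 1) (hP : IsKernel P) (hπ : IsPolicy π)
    (hρ0 : IsDist ρ0) : ∑ s, ∑ a, occ γ P π ρ0 s a = 1 := by
  have h := hasSum_sum (s := univ) fun s _ =>
    hasSum_sum (s := univ) fun a _ => hasSum_occ hγ hP hπ hρ0 s a
  simp only [← mul_sum, sum_saDist hP hπ hρ0, mul_one] at h
  rw [h.unique ((hasSum_geometric_of_lt_one hγ.1 hγ.2).mul_left (1 - γ)),
    mul_inv_cancel₀ (sub_ne_zero.2 hγ.2.ne')]

lemma sum_occ_eq_flow (hγ : γ ∈ Set.Ico 0 1) (hP : IsKernel P) (hπ : IsPolicy π)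
    (hρ0 : IsDist ρ0) (s : S) :
    ∑ a, occ γ P π ρ0 s a = (1 - γ) * ρ0 s + γ * ∑ s', ∑ a', P s' a' s * occ γ P π ρ0 s' a' := by
  set f : ℕ → ℝ := fun t => (1 - γ) * (γ ^ t * ∑ a, saDist P π ρ0 t s a)
  have h : HasSum f (∑ a, occ γ P π ρ0 s a) := by
    simpa only [← mul_sum] using hasSum_sum (s := univ) fun a _ => hasSum_occ hγ hP hπ hρ0 s a
  have hf0 : f 0 = (1 - γ) * ρ0 s := by
    simp only [f, saDist, pow_zero, one_mul, ← mul_sum, (hπ s).2, mul_one]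
  have hshift : (fun t => f (t + 1)) = fun t =>
      γ * ∑ s', ∑ a', P s' a' s * ((1 - γ) * (γ ^ t * saDist P π ρ0 t s' a')) := by
    funext t
    simp only [f]
    rw [sum_saDist_succ hπ]
    simp only [mul_sum]
    exact sum_congr rfl fun _ _ => sum_congr rfl fun _ _ => by ring
  have hf_succ :
      HasSum (fun t => f (t + 1)) (γ * ∑ s', ∑ a', P s' a' s * occ γ P π ρ0 s' a') := by
    rw [hshift]
    exact (hasSum_sum fun s' _ => hasSum_sum fun a' _ =>
      (hasSum_occ hγ hP hπ hρ0 s' a').mul_left (P s' a' s)).mul_left γ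
  rw [← hf0]
  exact h.unique hf_succ.zero_add

end Occupancy

section Realization
variable {S A : Type*} [Fintype S] [Fintype A] {γ : ℝ} {P : S → A → S → ℝ} {ρ0 : S → ℝ}

lemma occE_mem_MflowE {π : S → A → ℝ} (hγ : γ ∈ Set.Ico 0 1) (hP : IsKernel P)
    (hπ : IsPolicy π) (hρ0 : IsDist ρ0) : occE γ P π ρ0 ∈ MflowE γ P ρ0 :=
  ⟨fun p => occ_nonneg hγ hP hπ hρ0 p.1 p.2,
    (Fintype.sum_prod_type _).trans (sum_occ hγ hP hπ hρ0),
    sum_occ_eq_flow hγ hP hπ hρ0⟩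

lemma eq_of_discounted_fixedPoint {q : S → S → ℝ} (hq0 : ∀ s' s, 0 ≤ q s' s)
    (hq1 : ∀ s', ∑ s, q s' s = 1) (hγ : γ ∈ Set.Ico 0 1) {c ρ₁ ρ₂ : S → ℝ}
    (h₁ : ∀ s, ρ₁ s = c s + γ * ∑ s', q s' s * ρ₁ s')
    (h₂ : ∀ s, ρ₂ s = c s + γ * ∑ s', q s' s * ρ₂ s') : ρ₁ = ρ₂ := by
  have hγ0 : 0 ≤ γ := hγ.1
  set δ : S → ℝ := ρ₁ - ρ₂
  have hδ : ∀ s, δ s = γ * ∑ s', q s' s * δ s' := fun s => by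
    simp only [δ, Pi.sub_apply, mul_sub, sum_sub_distrib]
    rw [h₁ s, h₂ s]
    ring
  -- `ρ ↦ c + γ qᵀ ρ` is a `γ`-contraction for the ℓ¹ norm
  have hcontract : ∑ s, |δ s| ≤ γ * ∑ s, |δ s| :=
    calc ∑ s, |δ s| = ∑ s, γ * |∑ s', q s' s * δ s'| := sum_congr rfl fun s _ => by
          conv_lhs => rw [hδ s, abs_mul, abs_of_nonneg hγ0]
      _ ≤ ∑ s, γ * ∑ s', q s' s * |δ s'| := by
          gcongr with s
          refine (abs_sum_le_sum_abs _ _).trans_eq (sum_congr rfl fun s' _ => ?_)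
          rw [abs_mul, abs_of_nonneg (hq0 s' s)]
      _ = γ * ∑ s, |δ s| := by
          rw [← mul_sum, sum_comm]
          simp only [← sum_mul, hq1, one_mul]
  have hzero : ∑ s, |δ s| = 0 :=
    le_antisymm (by nlinarith [hγ.2, sum_nonneg fun s (_ : s ∈ univ) => abs_nonneg (δ s)])
      (sum_nonneg fun s _ => abs_nonneg (δ s))
  funext s
  have := (sum_eq_zero_iff_of_nonneg fun s _ => abs_nonneg (δ s)).1 hzero s (mem_univ s)
  simpa [δ, sub_eq_zero] using this

def condPolicy (μ : EuclideanSpace ℝ (S × A)) (s : S) (a : A) : ℝ :=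
  if 0 < margE μ s then μ (s, a) / margE μ s else (Fintype.card A : ℝ)⁻¹

lemma isPolicy_condPolicy [Nonempty A] {μ : EuclideanSpace ℝ (S × A)} (hμ : ∀ p, 0 ≤ μ p) :
    IsPolicy (condPolicy μ) := by
  intro s
  by_cases h : 0 < margE μ s
  · refine ⟨fun a => ?_, ?_⟩
    · simp only [condPolicy, if_pos h]
      exact div_nonneg (hμ (s, a)) h.le
    · simp only [condPolicy, if_pos h, ← sum_div]
      exact div_self h.ne'
  · refine ⟨fun a => ?_, ?_⟩
    · simp only [condPolicy, if_neg h]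
      positivity
    · simp only [condPolicy, if_neg h, sum_const, card_univ, nsmul_eq_mul]
      exact mul_inv_cancel₀ (Nat.cast_ne_zero.2 Fintype.card_ne_zero)

lemma apply_eq_margE_mul_condPolicy {μ : EuclideanSpace ℝ (S × A)} (hμ : ∀ p, 0 ≤ μ p)
    (s : S) (a : A) : μ (s, a) = margE μ s * condPolicy μ s a := by
  by_cases h : 0 < margE μ s
  · simp only [condPolicy, if_pos h]
    field_simp
  · have hmarg : margE μ s = 0 := le_antisymm (not_lt.1 h) (sum_nonneg fun a _ => hμ (s, a))
    rw [hmarg, zero_mul]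
    exact (sum_eq_zero_iff_of_nonneg fun a _ => hμ (s, a)).1 hmarg a (mem_univ a)

lemma margE_eq_flow_of_factor {π : S → A → ℝ} {ν : EuclideanSpace ℝ (S × A)}
    (hfac : ∀ s a, ν (s, a) = π s a * margE ν s)
    (hflow : ∀ s, ∑ a, ν (s, a) = (1 - γ) * ρ0 s + γ * ∑ s', ∑ a', P s' a' s * ν (s', a'))
    (s : S) : margE ν s
      = (1 - γ) * ρ0 s + γ * ∑ s', (∑ a', π s' a' * P s' a' s) * margE ν s' := by
  refine (hflow s).trans ?_
  simp only [hfac, sum_mul]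
  congr 2
  exact sum_congr rfl fun s' _ => sum_congr rfl fun a' _ => by ring

theorem occE_condPolicy [Nonempty A] (hγ : γ ∈ Set.Ico 0 1) (hP : IsKernel P)
    (hρ0 : IsDist ρ0) {μ : EuclideanSpace ℝ (S × A)} (hμ : μ ∈ MflowE γ P ρ0) :
    occE γ P (condPolicy μ) ρ0 = μ := by
  obtain ⟨hμ0, -, hμflow⟩ := hμ
  set π := condPolicy μ
  have hπ : IsPolicy π := isPolicy_condPolicy hμ0
  have hμfac : ∀ s a, μ (s, a) = π s a * margE μ s := fun s a => by
    rw [apply_eq_margE_mul_condPolicy hμ0 s a, mul_comm]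
  have hmarg : margE (occE γ P π ρ0) = margE μ := by
    refine WithLp.ofLp_injective 2 (eq_of_discounted_fixedPoint (γ := γ)
      (q := fun s' s => ∑ a, π s' a * P s' a s) ?_ ?_ hγ
      (margE_eq_flow_of_factor (fun s a => occ_eq_mul_sum hγ hP hπ hρ0 s a)
        (sum_occ_eq_flow hγ hP hπ hρ0))
      (margE_eq_flow_of_factor hμfac hμflow))
    · exact fun s' s => sum_nonneg fun a _ => mul_nonneg ((hπ s').1 a) ((hP s' a).1 s)
    · intro s'
      rw [sum_comm]
      simp only [← mul_sum, (hP _ _).2, mul_one, (hπ s').2]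
  ext ⟨s, a⟩
  rw [hμfac, ← hmarg]
  exact occ_eq_mul_sum hγ hP hπ hρ0 s a

theorem image_occE_isPolicy [Nonempty A] (hγ : γ ∈ Set.Ico 0 1) (hP : IsKernel P)
    (hρ0 : IsDist ρ0) : (fun π => occE γ P π ρ0) '' {π | IsPolicy π} = MflowE γ P ρ0 := by
  ext μ
  refine ⟨?_, fun hμ => ⟨condPolicy μ, isPolicy_condPolicy hμ.1, occE_condPolicy hγ hP hρ0 hμ⟩⟩
  rintro ⟨π, hπ, rfl⟩
  exact occE_mem_MflowE hγ hP hπ hρ0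

end Realization

section Objective
variable {S A : Type*} [Fintype S] [Fintype A]

lemma convex_MflowE {γ : ℝ} {P : S → A → S → ℝ} {ρ0 : S → ℝ} : Convex ℝ (MflowE γ P ρ0) := by
  rintro μ ⟨hμ0, hμ1, hμflow⟩ ν ⟨hν0, hν1, hνflow⟩ a b ha hb hab
  refine ⟨fun p => ?_, ?_, fun s => ?_⟩
  · simp only [PiLp.add_apply, PiLp.smul_apply, smul_eq_mul]
    exact add_nonneg (mul_nonneg ha (hμ0 p)) (mul_nonneg hb (hν0 p))
  · simp only [PiLp.add_apply, PiLp.smul_apply, smul_eq_mul, sum_add_distrib, ← mul_sum, hμ1,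
      hν1, mul_one, hab]
  · simp only [PiLp.add_apply, PiLp.smul_apply, smul_eq_mul, sum_add_distrib, ← mul_sum,
      hμflow s, hνflow s, mul_add, mul_left_comm _ a, mul_left_comm _ b]
    linear_combination (1 - γ) * ρ0 s * hab

lemma margE_mem_stdSimplex {μ : EuclideanSpace ℝ (S × A)} (hμ0 : ∀ p, 0 ≤ μ p)
    (hμ1 : ∑ p, μ p = 1) : (margE μ).ofLp ∈ stdSimplex ℝ S :=
  ⟨fun s => sum_nonneg fun a _ => hμ0 (s, a), (Fintype.sum_prod_type' _).symm.trans hμ1⟩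

def margCLM : EuclideanSpace ℝ (S × A) →L[ℝ] EuclideanSpace ℝ S :=
  LinearMap.toContinuousLinearMap
    { toFun := margE
      map_add' := fun μ ν => by ext s; simp [margE, sum_add_distrib]
      map_smul' := fun c μ => by ext s; simp [margE, mul_sum] }

lemma margCLM_apply (μ : EuclideanSpace ℝ (S × A)) : margCLM μ = margE μ := rfl

def pairing (w : S → A → ℝ) : EuclideanSpace ℝ (S × A) →L[ℝ] ℝ :=
  LinearMap.toContinuousLinearMap
    { toFun := fun μ => ∑ s, ∑ a, μ (s, a) * w s a
      map_add' := fun μ ν => by simp [add_mul, sum_add_distrib]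
      map_smul' := fun c μ => by simp [mul_sum, mul_assoc] }

lemma inner_margE (g : EuclideanSpace ℝ S) (μ : EuclideanSpace ℝ (S × A)) :
    ⟪g, margE μ⟫ = pairing (fun s _ => g s) μ := by
  simp [PiLp.inner_apply, margE, pairing, mul_sum, mul_comm]

def sepObjective (r : S → A → ℝ) (G : EuclideanSpace ℝ S → ℝ) (μ : EuclideanSpace ℝ (S × A)) :
    ℝ :=
  pairing r μ + G (margE μ)

lemma hasFDerivAt_sepObjective (r : S → A → ℝ) {G : EuclideanSpace ℝ S → ℝ}
    {g : EuclideanSpace ℝ S} {μ : EuclideanSpace ℝ (S × A)} (hG : HasGradientAt G g (margE μ)) :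
    HasFDerivAt (sepObjective r G) (pairing fun s a => r s a + g s) μ := by
  refine ((pairing r).hasFDerivAt.add (hG.hasFDerivAt.comp μ margCLM.hasFDerivAt)).congr_fderiv ?_
  ext ν
  rw [add_apply, ContinuousLinearMap.comp_apply,
    InnerProductSpace.toDual_apply_apply, margCLM_apply, inner_margE]
  simp [pairing, mul_add, sum_add_distrib]

lemma concaveOn_sepObjective {γ : ℝ} {P : S → A → S → ℝ} {ρ0 : S → ℝ} (r : S → A → ℝ)
    {G : EuclideanSpace ℝ S → ℝ} (hG : ConcaveOn ℝ (WithLp.ofLp ⁻¹' stdSimplex ℝ S) G) :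
    ConcaveOn ℝ (MflowE γ P ρ0) (sepObjective r G) :=
  ((pairing r).toLinearMap.concaveOn convex_MflowE).add
    ((hG.comp_linearMap margCLM.toLinearMap).subset
      (fun _ hμ => margE_mem_stdSimplex hμ.1 hμ.2.1) convex_MflowE)

end Objective

theorem stmt10_general {S A : Type*} [Fintype S] [Fintype A] [Nonempty A]
    (γ : ℝ) (hγ : γ ∈ Set.Ioo (0 : ℝ) 1)
    (P : S → A → S → ℝ) (hP : IsKernel P)
    (ρ0 : S → ℝ) (hρ0 : IsDist ρ0)
    (r : S → A → ℝ)
    (G : EuclideanSpace ℝ S → ℝ) (g : EuclideanSpace ℝ S → EuclideanSpace ℝ S)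
    (hG : ConcaveOn ℝ (WithLp.ofLp ⁻¹' stdSimplex ℝ S) G)
    (hgrad : ∀ ρ ∈ stdSimplex ℝ S, HasGradientAt G (g (WithLp.toLp 2 ρ)) (WithLp.toLp 2 ρ))
    (π : S → A → ℝ) (hπ : IsPolicy π) :
    (∀ π' : S → A → ℝ, IsPolicy π' →
        (∑ s : S, ∑ a : A, occ γ P π' ρ0 s a * r s a) + G (margE (occE γ P π' ρ0))
          ≤ (∑ s : S, ∑ a : A, occ γ P π ρ0 s a * r s a) + G (margE (occE γ P π ρ0))) ↔
    (∀ π' : S → A → ℝ, IsPolicy π' →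
        (∑ s : S, ∑ a : A, occ γ P π' ρ0 s a * (r s a + g (margE (occE γ P π ρ0)) s))
          ≤ ∑ s : S, ∑ a : A, occ γ P π ρ0 s a * (r s a + g (margE (occE γ P π ρ0)) s)) := by
  have hγ' : γ ∈ Set.Ico 0 1 := Set.Ioo_subset_Ico_self hγ
  have hμπ := occE_mem_MflowE hγ' hP hπ hρ0
  have hderiv : HasFDerivAt (sepObjective r G)
      (pairing fun s a => r s a + g (margE (occE γ P π ρ0)) s) (occE γ P π ρ0) :=
    hasFDerivAt_sepObjective r (hgrad _ (margE_mem_stdSimplex hμπ.1 hμπ.2.1))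
  have hopt := ConcaveOn.isMaxOn_iff_fderiv_le (concaveOn_sepObjective r hG) hμπ hderiv
  rw [isMaxOn_iff, ← image_occE_isPolicy hγ' hP hρ0, Set.forall_mem_image,
    Set.forall_mem_image] at hopt
  exact hopt

/-- Separable case: for `F(μ) = ⟨μ, r⟩ + G(ρ)` with `G` differentiable and
concave, and MFG reward `R(s,a,ρ) = r(s,a) + ∇G(ρ)(s)`, a policy `π` maximizes
`F(μ_π)` over all policies iff it is a Nash equilibrium of the MFG, i.e.
`J(π', ρ_π) ≤ J(π, ρ_π)` for all policies `π'`, where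
`J(π', ρ) = ⟨μ_{π'}, R(·,·,ρ)⟩`. -/
theorem stmt10 {S A : Type*} [Fintype S] [Fintype A] [Nonempty S] [Nonempty A]
    (γ : ℝ) (hγ : γ ∈ Set.Ioo (0 : ℝ) 1)
    (P : S → A → S → ℝ) (hP : IsKernel P)
    (ρ0 : S → ℝ) (hρ0 : IsDist ρ0)
    (r : S → A → ℝ)
    (G : EuclideanSpace ℝ S → ℝ) (g : EuclideanSpace ℝ S → EuclideanSpace ℝ S)
    (hG : ConcaveOn ℝ (WithLp.ofLp ⁻¹' stdSimplex ℝ S) G)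
    (hgrad : ∀ ρ ∈ stdSimplex ℝ S, HasGradientAt G (g (WithLp.toLp 2 ρ)) (WithLp.toLp 2 ρ))
    (π : S → A → ℝ) (hπ : IsPolicy π) :
    (∀ π' : S → A → ℝ, IsPolicy π' →
        (∑ s : S, ∑ a : A, occ γ P π' ρ0 s a * r s a) + G (margE (occE γ P π' ρ0))
          ≤ (∑ s : S, ∑ a : A, occ γ P π ρ0 s a * r s a) + G (margE (occE γ P π ρ0))) ↔
    (∀ π' : S → A → ℝ, IsPolicy π' →
        (∑ s : S, ∑ a : A, occ γ P π' ρ0 s a * (r s a + g (margE (occE γ P π ρ0)) s))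
          ≤ ∑ s : S, ∑ a : A, occ γ P π ρ0 s a * (r s a + g (margE (occE γ P π ρ0)) s)) :=
  stmt10_general γ hγ P hP ρ0 hρ0 r G g hG hgrad π hπ
end
end

section
/- In a finite MDP with population-dependent reward R(·,μ) = ∇F(μ) for F strictly concave and differentiable, the Nash equilibrium occupancy measure is unique: if π and π' are both Nash equilibria (zero exploitability), then μ_π = μ_{π'}. -/
/-
Occupancy measures of policies satisfy the Bellman flow equations, so they lie in `M`.
If `μ` is an equilibrium then `⟪ν - μ, ∇F μ⟫ ≤ 0` for every other occupancy measure `ν`,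
while strict concavity makes the gradient strictly monotone on `M`:
`⟪ν - μ, ∇F μ - ∇F ν⟫ > 0` for `μ ≠ ν`. Adding the equilibrium inequalities of two
equilibria `μ, ν` contradicts this.
-/

noncomputable section
open scoped BigOperators

open scoped RealInnerProductSpace

theorem StrictConcaveOn.comp_affineMap_of_injective {E F : Type*} [AddCommGroup E] [Module ℝ E]
    [AddCommGroup F] [Module ℝ F] {f : F → ℝ} {s : Set F} (hf : StrictConcaveOn ℝ s f)
    (g : E →ᵃ[ℝ] F) (hg : Function.Injective g) : StrictConcaveOn ℝ (g ⁻¹' s) (f ∘ g) :=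
  ⟨hf.1.affine_preimage g, fun x hx y hy hxy a b ha hb hab => by
    simpa only [Function.comp_apply, Convex.combo_affine_apply hab]
      using hf.2 hx hy (hg.ne hxy) ha hb hab⟩

theorem StrictConcaveOn.lt_add_of_hasFDerivAt {E : Type*} [NormedAddCommGroup E]
    [NormedSpace ℝ E] {s : Set E} {f : E → ℝ} (hf : StrictConcaveOn ℝ s f) {x y : E}
    (hx : x ∈ s) (hy : y ∈ s) (hxy : x ≠ y) {f' : E →L[ℝ] ℝ} (hf' : HasFDerivAt f f' x) :
    f y < f x + f' (y - x) := by
  let ℓ : ℝ →ᵃ[ℝ] E := AffineMap.lineMap x y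
  have hline := hf.comp_affineMap_of_injective ℓ (AffineMap.lineMap_injective ℝ hxy)
  have hderiv : HasDerivAt (f ∘ ℓ) (f' (y - x)) 0 := by
    rw [← AffineMap.lineMap_apply_zero x y (k := ℝ)] at hf'
    exact hf'.comp_hasDerivAt 0 AffineMap.hasDerivAt_lineMap
  have := hline.slope_lt_of_hasDerivAt (x := 0) (y := 1) (by simpa [ℓ] using hx)
    (by simpa [ℓ] using hy) zero_lt_one hderiv
  simp only [slope_def_field, Function.comp_apply, ℓ, AffineMap.lineMap_apply_zero,
    AffineMap.lineMap_apply_one, sub_zero, div_one] at this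
  linarith

theorem StrictConcaveOn.inner_sub_gradient_pos {E : Type*} [NormedAddCommGroup E]
    [InnerProductSpace ℝ E] [CompleteSpace E] {s : Set E} {f : E → ℝ}
    (hf : StrictConcaveOn ℝ s f) {x y g g' : E} (hx : x ∈ s) (hy : y ∈ s) (hxy : x ≠ y)
    (hg : HasGradientAt f g x) (hg' : HasGradientAt f g' y) : 0 < ⟪y - x, g - g'⟫ := by
  have h₁ := hf.lt_add_of_hasFDerivAt hx hy hxy hg.hasFDerivAt
  have h₂ := hf.lt_add_of_hasFDerivAt hy hx hxy.symm hg'.hasFDerivAt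
  simp only [InnerProductSpace.toDual_apply_apply] at h₁ h₂
  rw [← neg_sub y x, inner_neg_right] at h₂
  rw [inner_sub_right, real_inner_comm, real_inner_comm g']
  linarith

namespace MDP

variable {S A : Type*} [Fintype S] [Fintype A] {P : S → A → S → ℝ} {π : S → A → ℝ}
  {ρ0 : S → ℝ}

theorem saDist_nonneg (hP : IsKernel P) (hπ : IsPolicy π) (hρ0 : IsDist ρ0) :
    ∀ t s a, 0 ≤ saDist P π ρ0 t s a
  | 0, s, a => mul_nonneg (hρ0.1 s) ((hπ s).1 a)
  | t + 1, s, a => mul_nonneg ((hπ s).1 a) <| Finset.sum_nonneg fun s' _ =>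
      Finset.sum_nonneg fun a' _ => mul_nonneg ((hP s' a').1 s) (saDist_nonneg hP hπ hρ0 t s' a')

theorem sum_saDist_zero (hπ : IsPolicy π) (s : S) : ∑ a, saDist P π ρ0 0 s a = ρ0 s := by
  simp only [saDist, ← Finset.mul_sum, (hπ s).2, mul_one]

theorem sum_saDist_succ (hπ : IsPolicy π) (t : ℕ) (s : S) :
    ∑ a, saDist P π ρ0 (t + 1) s a = ∑ s', ∑ a', P s' a' s * saDist P π ρ0 t s' a' := by
  simp only [saDist, ← Finset.sum_mul, (hπ s).2, one_mul]

theorem sum_sum_saDist (hP : IsKernel P) (hπ : IsPolicy π) (hρ0 : IsDist ρ0) :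
    ∀ t, ∑ s, ∑ a, saDist P π ρ0 t s a = 1
  | 0 => by simp only [sum_saDist_zero hπ, hρ0.2]
  | t + 1 => by
    simp only [sum_saDist_succ hπ]
    rw [Finset.sum_comm, ← sum_sum_saDist hP hπ hρ0 t]
    refine Finset.sum_congr rfl fun s' _ => ?_
    rw [Finset.sum_comm]
    simp only [← Finset.sum_mul, (hP s' _).2, one_mul]

theorem saDist_le_one (hP : IsKernel P) (hπ : IsPolicy π) (hρ0 : IsDist ρ0) (t : ℕ) (s : S)
    (a : A) : saDist P π ρ0 t s a ≤ 1 := by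
  have hnn := saDist_nonneg hP hπ hρ0 t
  calc saDist P π ρ0 t s a ≤ ∑ a', saDist P π ρ0 t s a' :=
        Finset.single_le_sum (fun a' _ => hnn s a') (Finset.mem_univ a)
    _ ≤ ∑ s', ∑ a', saDist P π ρ0 t s' a' :=
        Finset.single_le_sum (fun s' _ => Finset.sum_nonneg fun a' _ => hnn s' a')
          (Finset.mem_univ s)
    _ = 1 := sum_sum_saDist hP hπ hρ0 t

variable {γ : ℝ}

theorem hasSum_occ (hγ : γ ∈ Set.Ioo (0 : ℝ) 1) (hP : IsKernel P) (hπ : IsPolicy π)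
    (hρ0 : IsDist ρ0) (s : S) (a : A) :
    HasSum (fun t => (1 - γ) * (γ ^ t * saDist P π ρ0 t s a)) (occ γ P π ρ0 s a) := by
  refine (Summable.hasSum ?_).mul_left (1 - γ)
  refine (summable_geometric_of_lt_one hγ.1.le hγ.2).of_nonneg_of_le
    (fun t => mul_nonneg (pow_nonneg hγ.1.le t) (saDist_nonneg hP hπ hρ0 t s a)) fun t => ?_
  exact mul_le_of_le_one_right (pow_nonneg hγ.1.le t) (saDist_le_one hP hπ hρ0 t s a)

theorem sum_sum_occ (hγ : γ ∈ Set.Ioo (0 : ℝ) 1) (hP : IsKernel P) (hπ : IsPolicy π)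
    (hρ0 : IsDist ρ0) : ∑ s, ∑ a, occ γ P π ρ0 s a = 1 := by
  have h := hasSum_sum (s := .univ) fun s _ =>
    hasSum_sum (s := .univ) fun a _ => hasSum_occ hγ hP hπ hρ0 s a
  simp only [← Finset.mul_sum, sum_sum_saDist hP hπ hρ0, mul_one] at h
  refine h.unique ?_
  simpa [mul_inv_cancel₀ (sub_pos.2 hγ.2).ne']
    using (hasSum_geometric_of_lt_one hγ.1.le hγ.2).mul_left (1 - γ)

theorem sum_occ_eq (hγ : γ ∈ Set.Ioo (0 : ℝ) 1) (hP : IsKernel P) (hπ : IsPolicy π)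
    (hρ0 : IsDist ρ0) (s : S) : ∑ a, occ γ P π ρ0 s a =
      (1 - γ) * ρ0 s + γ * ∑ s', ∑ a', P s' a' s * occ γ P π ρ0 s' a' := by
  have hmarg := hasSum_sum (s := .univ) fun a _ => hasSum_occ hγ hP hπ hρ0 s a
  have hflow := (hasSum_sum (s := .univ) fun s' _ => hasSum_sum (s := .univ) fun a' _ =>
    (hasSum_occ hγ hP hπ hρ0 s' a').mul_left (P s' a' s)).mul_left γ
  -- after the `t = 0` term, the series of marginals at `s` is `γ` times the discounted inflow
  rw [← hasSum_nat_add_iff' 1] at hmarg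
  simp only [← Finset.mul_sum, sum_saDist_succ hπ, Finset.sum_range_one, sum_saDist_zero hπ]
    at hmarg
  have h := hmarg.unique <| hflow.congr_fun fun t => by
    simp only [Finset.mul_sum]
    exact Finset.sum_congr rfl fun _ _ => Finset.sum_congr rfl fun _ _ => by ring
  rw [pow_zero, one_mul] at h
  linarith

theorem occE_mem_MflowE (hγ : γ ∈ Set.Ioo (0 : ℝ) 1) (hP : IsKernel P) (hπ : IsPolicy π)
    (hρ0 : IsDist ρ0) : occE γ P π ρ0 ∈ MflowE γ P ρ0 := by
  refine ⟨fun p => (hasSum_occ hγ hP hπ hρ0 p.1 p.2).nonneg fun t => ?_, ?_,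
    sum_occ_eq hγ hP hπ hρ0⟩
  · exact mul_nonneg (sub_pos.2 hγ.2).le
      (mul_nonneg (pow_nonneg hγ.1.le t) (saDist_nonneg hP hπ hρ0 t p.1 p.2))
  · exact (Fintype.sum_prod_type _).trans (sum_sum_occ hγ hP hπ hρ0)

end MDP

theorem stmt19_general {S A : Type*} [Fintype S] [Fintype A]
    (γ : ℝ) (hγ : γ ∈ Set.Ioo (0 : ℝ) 1)
    (P : S → A → S → ℝ) (hP : IsKernel P)
    (ρ0 : S → ℝ) (hρ0 : IsDist ρ0)
    (F : EuclideanSpace ℝ (S × A) → ℝ)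
    (R : EuclideanSpace ℝ (S × A) → EuclideanSpace ℝ (S × A))
    (hF : StrictConcaveOn ℝ (MflowE γ P ρ0) F)
    (hgrad : ∀ μ ∈ MflowE γ P ρ0, HasGradientAt F (R μ) μ)
    (π π' : S → A → ℝ) (hπ : IsPolicy π) (hπ' : IsPolicy π')
    (hNash : ∀ π'' : S → A → ℝ, IsPolicy π'' →
      ⟪occE γ P π'' ρ0, R (occE γ P π ρ0)⟫ ≤ ⟪occE γ P π ρ0, R (occE γ P π ρ0)⟫)
    (hNash' : ∀ π'' : S → A → ℝ, IsPolicy π'' →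
      ⟪occE γ P π'' ρ0, R (occE γ P π' ρ0)⟫ ≤ ⟪occE γ P π' ρ0, R (occE γ P π' ρ0)⟫) :
    occE γ P π ρ0 = occE γ P π' ρ0 := by
  by_contra hne
  have hμ := MDP.occE_mem_MflowE hγ hP hπ hρ0
  have hν := MDP.occE_mem_MflowE hγ hP hπ' hρ0
  have hmono := hF.inner_sub_gradient_pos hμ hν hne (hgrad _ hμ) (hgrad _ hν)
  have h₁ := hNash π' hπ'
  have h₂ := hNash' π hπ
  rw [inner_sub_left, inner_sub_right, inner_sub_right] at hmono
  linarith

/-- Uniqueness of the Nash occupancy measure for a strictly concave potential: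
if `F` is strictly concave and differentiable on `M`, with MFG reward
`R(·,μ) = ∇F(μ)`, and `π`, `π'` are both Nash equilibria (zero exploitability),
then `μ_π = μ_{π'}`. -/
theorem stmt19 {S A : Type*} [Fintype S] [Fintype A] [Nonempty S] [Nonempty A]
    (γ : ℝ) (hγ : γ ∈ Set.Ioo (0 : ℝ) 1)
    (P : S → A → S → ℝ) (hP : IsKernel P)
    (ρ0 : S → ℝ) (hρ0 : IsDist ρ0)
    (F : EuclideanSpace ℝ (S × A) → ℝ)
    (R : EuclideanSpace ℝ (S × A) → EuclideanSpace ℝ (S × A))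
    (hF : StrictConcaveOn ℝ (MflowE γ P ρ0) F)
    (hgrad : ∀ μ ∈ MflowE γ P ρ0, HasGradientAt F (R μ) μ)
    (π π' : S → A → ℝ) (hπ : IsPolicy π) (hπ' : IsPolicy π')
    (hNash : ∀ π'' : S → A → ℝ, IsPolicy π'' →
      ⟪occE γ P π'' ρ0, R (occE γ P π ρ0)⟫ ≤ ⟪occE γ P π ρ0, R (occE γ P π ρ0)⟫)
    (hNash' : ∀ π'' : S → A → ℝ, IsPolicy π'' →
      ⟪occE γ P π'' ρ0, R (occE γ P π' ρ0)⟫ ≤ ⟪occE γ P π' ρ0, R (occE γ P π' ρ0)⟫) :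
    occE γ P π ρ0 = occE γ P π' ρ0 :=
  stmt19_general γ hγ P hP ρ0 hρ0 F R hF hgrad π π' hπ hπ' hNash hNash'
end
end
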